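/- arXiv:1404.7348 — 2 statements merged into one kernel-verified Lean document; each statement's English description precedes it below -/
import Mathlib

section
/- Let α > 5/6 be fixed, p = n^{-α}, and G ~ G(n,p). Then for any constant c > 0, the probability that every set of at most c√n vertices of G induces a 3-colorable subgraph tends to 1 as n → ∞. Specifically, the probability that some set T of 4 ≤ t ≤ c√n vertices is not 3-colorable is at most Σ_{t=4}^{c√n} C(n,t)·C(C(t,2), 3t/2)·p^{3t/2}, which is o(1). -/
open MeasureTheory

noncomputable def bernoulliMeasure (p : ℝ) : Measure Bool :=
  ENNReal.ofReal p • Measure.dirac true + ENNReal.ofReal (1 - p) • Measure.dirac false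

/-- The Erdős–Rényi measure `G(n,p)` on edge indicator functions. -/
noncomputable def gnp (n : ℕ) (p : ℝ) : Measure (Sym2 (Fin n) → Bool) :=
  Measure.pi fun _ => bernoulliMeasure p

def graphOf {n : ℕ} (ω : Sym2 (Fin n) → Bool) : SimpleGraph (Fin n) :=
  SimpleGraph.fromRel fun u v => ω s(u, v) = true

/-!
If `G[S]` is not 3-colourable, repeatedly deleting a vertex with fewer than 3 neighbours (which
cannot destroy a 3-colouring) leaves a nonempty `T ⊆ S` in which every vertex has at least 3
neighbours, so `T` spans at least `3|T|/2` edges. A union bound over `T` and over sets of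
`⌈3t/2⌉` pairs inside `T` bounds the failure probability by
`∑_{t ≤ c√n} C(n,t) C(t², ⌈3t/2⌉) p^⌈3t/2⌉ ≤ ∑_t r^t`, using `C(m,k) ≤ (e m / k)^k`, where
`r² = e⁵ c √n n² p³ = e⁵ c n^(5/2 - 3α)`; this tends to `0` exactly when `α > 5/6`.
-/

open Finset Filter Topology Real

lemma bernoulliMeasure_singleton_true (p : ℝ) :
    bernoulliMeasure p {true} = ENNReal.ofReal p := by
  simp [bernoulliMeasure]

lemma isProbabilityMeasure_bernoulliMeasure {p : ℝ} (hp₀ : 0 ≤ p) (hp₁ : p ≤ 1) :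
    IsProbabilityMeasure (bernoulliMeasure p) := by
  constructor
  simp [bernoulliMeasure, ← ENNReal.ofReal_add hp₀ (sub_nonneg.2 hp₁)]

lemma isProbabilityMeasure_gnp (n : ℕ) {p : ℝ} (hp₀ : 0 ≤ p) (hp₁ : p ≤ 1) :
    IsProbabilityMeasure (gnp n p) :=
  have := isProbabilityMeasure_bernoulliMeasure hp₀ hp₁
  Measure.pi.instIsProbabilityMeasure _

lemma gnp_forall_mem_eq_true {n : ℕ} {p : ℝ} (hp₀ : 0 ≤ p) (hp₁ : p ≤ 1)
    (F : Finset (Sym2 (Fin n))) :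
    gnp n p {ω | ∀ e ∈ F, ω e = true} = ENNReal.ofReal p ^ #F := by
  have := isProbabilityMeasure_bernoulliMeasure hp₀ hp₁
  change Measure.pi _ ((F : Set (Sym2 (Fin n))).pi fun _ => {true}) = _
  simp [Measure.pi_pi_finset, bernoulliMeasure_singleton_true]

lemma gnp_le_card_filter_le {n : ℕ} {p : ℝ} (hp₀ : 0 ≤ p) (hp₁ : p ≤ 1)
    (E : Finset (Sym2 (Fin n))) (k : ℕ) :
    gnp n p {ω | k ≤ #{e ∈ E | ω e = true}} ≤ ENNReal.ofReal ((#E).choose k * p ^ k) := by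
  have hcover : {ω : Sym2 (Fin n) → Bool | k ≤ #{e ∈ E | ω e = true}} ⊆
      ⋃ F ∈ E.powersetCard k, {ω : Sym2 (Fin n) → Bool | ∀ e ∈ F, ω e = true} := by
    intro ω hω
    obtain ⟨F, hFE, hF⟩ := exists_subset_card_eq hω
    simp only [Set.mem_iUnion, mem_powersetCard]
    exact ⟨F, ⟨hFE.trans (filter_subset _ _), hF⟩, fun e he => (mem_filter.1 (hFE he)).2⟩
  calc gnp n p {ω : Sym2 (Fin n) → Bool | k ≤ #{e ∈ E | ω e = true}}
      ≤ ∑ F ∈ E.powersetCard k, gnp n p {ω : Sym2 (Fin n) → Bool | ∀ e ∈ F, ω e = true} :=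
        (measure_mono hcover).trans (measure_biUnion_finset_le _ _)
    _ = ENNReal.ofReal ((#E).choose k * p ^ k) := by
        rw [sum_congr rfl fun F hF => by
            rw [gnp_forall_mem_eq_true hp₀ hp₁, (mem_powersetCard.1 hF).2]]
        simp [ENNReal.ofReal_mul, ENNReal.ofReal_pow hp₀]

lemma graphOf_edgeSet_subset {n : ℕ} (ω : Sym2 (Fin n) → Bool) :
    (graphOf ω).edgeSet ⊆ {e | ω e = true} := by
  intro e he
  induction e using Sym2.ind with
  | _ u v =>
    rcases ((graphOf ω).mem_edgeSet.1 he).2 with h | h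
    · exact h
    · rwa [Sym2.eq_swap]

namespace SimpleGraph

variable {V : Type*} (G : SimpleGraph V)

theorem colorable_induce_iff_exists {s : Set V} {k : ℕ} [NeZero k] :
    (G.induce s).Colorable k ↔ ∃ f : V → Fin k, ∀ u ∈ s, ∀ w ∈ s, G.Adj u w → f u ≠ f w := by
  classical
  constructor
  · rintro ⟨C⟩
    refine ⟨fun u => if hu : u ∈ s then C ⟨u, hu⟩ else 0, fun u hu w hw huw => ?_⟩
    simpa [hu, hw] using C.valid (show (G.induce s).Adj ⟨u, hu⟩ ⟨w, hw⟩ from huw)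
  · rintro ⟨f, hf⟩
    exact ⟨Coloring.mk (fun u => f u) fun {u w} huw => hf u u.2 w w.2 huw⟩

variable [Fintype V] [DecidableEq V] [DecidableRel G.Adj]

theorem colorable_induce_of_erase {k : ℕ} {T : Finset V} {v : V}
    (hv : #(G.neighborFinset v ∩ T) < k) (h : (G.induce (T.erase v : Set V)).Colorable k) :
    (G.induce (T : Set V)).Colorable k := by
  have : NeZero k := ⟨by omega⟩
  obtain ⟨f, hf⟩ := G.colorable_induce_iff_exists.1 h
  obtain ⟨c, hc⟩ : ∃ c, c ∉ (G.neighborFinset v ∩ T).image f := by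
    by_contra! hall
    have := card_le_card (fun c _ => hall c : (univ : Finset (Fin k)) ⊆ _)
    simp only [card_univ, Fintype.card_fin] at this
    exact (card_image_le.trans_lt hv).not_ge this
  have hnbr : ∀ w ∈ T, G.Adj v w → Function.update f v c w ≠ c := by
    intro w hw hvw
    rw [Function.update_of_ne (G.ne_of_adj hvw).symm]
    exact fun hwc => hc (mem_image.2 ⟨w, by simp [hw, hvw], hwc⟩)
  refine G.colorable_induce_iff_exists.2 ⟨Function.update f v c, fun u hu w hw huw => ?_⟩
  by_cases huv : u = v
  · subst huv; simpa using (hnbr w hw huw).symm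
  by_cases hwv : w = v
  · subst hwv; simpa using hnbr u hu huw.symm
  simpa [huv, hwv] using hf u (by simp [hu, huv]) w (by simp [hw, hwv]) huw

theorem exists_subset_le_card_neighborFinset_inter_of_not_colorable {k : ℕ} {S : Finset V}
    (h : ¬ (G.induce (S : Set V)).Colorable k) :
    ∃ T ⊆ S, T.Nonempty ∧ ∀ v ∈ T, k ≤ #(G.neighborFinset v ∩ T) := by
  induction S using Finset.strongInduction with
  | H S ih =>
    by_cases hlow : ∃ v ∈ S, #(G.neighborFinset v ∩ S) < k
    · obtain ⟨v, hvS, hv⟩ := hlow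
      obtain ⟨T, hTS, hT⟩ := ih (S.erase v) (erase_ssubset hvS)
        fun hc => h (G.colorable_induce_of_erase hv hc)
      exact ⟨T, hTS.trans (erase_subset _ _), hT⟩
    · refine ⟨S, subset_rfl, nonempty_iff_ne_empty.2 ?_, by simpa using hlow⟩
      rintro rfl
      exact h (@Colorable.of_isEmpty _ _ (by simp) _)

theorem mul_card_le_two_mul_card_edgeFinset_inter_sym2 {k : ℕ} {T : Finset V}
    (h : ∀ v ∈ T, k ≤ #(G.neighborFinset v ∩ T)) :
    k * #T ≤ 2 * #(G.edgeFinset ∩ T.sym2) := by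
  have hdeg (v : (T : Set V)) :
      (G.induce (T : Set V)).degree v = #(G.neighborFinset v ∩ T) := by
    have := congrArg card (G.map_neighborFinset_induce v)
    rw [card_map] at this
    rw [← card_neighborFinset_eq_degree]
    -- `convert` reconciles the different `Fintype` instances on the subtype `↥T`
    convert this using 2 <;> ext <;> simp
  have hedge : #(G.induce (T : Set V)).edgeFinset = #(G.edgeFinset ∩ T.sym2) := by
    have := congrArg card (G.map_edgeFinset_induce (s := (T : Set V)))
    rw [card_map] at this
    convert this using 3
    simp
  calc k * #T = ∑ _v ∈ T, k := by rw [sum_const, smul_eq_mul, mul_comm]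
    _ ≤ ∑ v ∈ T, #(G.neighborFinset v ∩ T) := sum_le_sum h
    _ = ∑ v : (T : Set V), (G.induce (T : Set V)).degree v := by
        simp only [hdeg]; exact (sum_coe_sort T _).symm
    _ = 2 * #(G.edgeFinset ∩ T.sym2) := by
        rw [sum_degrees_eq_twice_card_edges, hedge]

end SimpleGraph

theorem Nat.choose_le_exp_one_mul_div_pow (m k : ℕ) :
    (m.choose k : ℝ) ≤ (exp 1 * m / k) ^ k := by
  calc (m.choose k : ℝ) ≤ (m : ℝ) ^ k / k.factorial := Nat.choose_le_pow_div k m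
    _ = (m / k : ℝ) ^ k * ((k : ℝ) ^ k / k.factorial) := by
        rcases k.eq_zero_or_pos with rfl | hk
        · simp
        · rw [div_pow, div_mul_div_cancel₀ (by positivity)]
    _ ≤ (m / k : ℝ) ^ k * exp k := by gcongr; exact pow_div_factorial_le_exp _ (by positivity) k
    _ = (exp 1 * m / k) ^ k := by rw [← exp_one_pow]; ring

theorem choose_mul_choose_mul_pow_le {n t m k : ℕ} {p s r : ℝ} (ht : 1 ≤ t)
    (hm : (m : ℝ) ≤ t ^ 2) (hk : 3 * t ≤ 2 * k) (hp : 0 ≤ p) (hts : (t : ℝ) ≤ s)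
    (hsp : exp 1 * s * p ≤ 1) (hr : 0 ≤ r) (hrsq : exp 1 ^ 5 * s * n ^ 2 * p ^ 3 ≤ r ^ 2) :
    (n.choose t : ℝ) * (m.choose k * p ^ k) ≤ r ^ t := by
  have ht0 : (0 : ℝ) < t := by exact_mod_cast ht
  have hk0 : (0 : ℝ) < k := by norm_cast; omega
  have htk : (t : ℝ) ≤ k := by norm_cast; omega
  have hq0 : 0 ≤ exp 1 * t * p := by positivity
  have hq1 : exp 1 * t * p ≤ 1 := le_trans (by gcongr) hsp
  have hedges : (m.choose k : ℝ) * p ^ k ≤ (exp 1 * t * p) ^ k :=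
    calc (m.choose k : ℝ) * p ^ k ≤ (exp 1 * m / k) ^ k * p ^ k := by
          gcongr; exact Nat.choose_le_exp_one_mul_div_pow m k
      _ = (exp 1 * m / k * p) ^ k := by rw [mul_pow]
      _ ≤ (exp 1 * t * p) ^ k := by
          gcongr
          rw [div_le_iff₀ hk0, mul_assoc]
          gcongr
          nlinarith
  -- squaring turns the exponent `k ≥ 3t/2` into the integer exponent `3t`
  have hsq : ((n.choose t : ℝ) * (m.choose k * p ^ k)) ^ 2 ≤ (r ^ 2) ^ t :=
    calc ((n.choose t : ℝ) * (m.choose k * p ^ k)) ^ 2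
        ≤ ((exp 1 * n / t) ^ t * (exp 1 * t * p) ^ k) ^ 2 := by
          gcongr; exact Nat.choose_le_exp_one_mul_div_pow n t
      _ = ((exp 1 * n / t) ^ t) ^ 2 * (exp 1 * t * p) ^ (2 * k) := by ring
      _ ≤ ((exp 1 * n / t) ^ t) ^ 2 * (exp 1 * t * p) ^ (3 * t) := by
          exact mul_le_mul_of_nonneg_left (pow_le_pow_of_le_one hq0 hq1 hk) (by positivity)
      _ = ((exp 1 * n / t) ^ 2 * (exp 1 * t * p) ^ 3) ^ t := by ring
      _ = (exp 1 ^ 5 * t * n ^ 2 * p ^ 3) ^ t := by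
          congr 1
          field_simp
      _ ≤ (r ^ 2) ^ t := pow_le_pow_left₀ (by positivity) (le_trans (by gcongr) hrsq) t
  rw [← pow_mul, mul_comm 2 t, pow_mul] at hsq
  exact (pow_le_pow_iff_left₀ (by positivity) (by positivity) two_ne_zero).1 hsq

theorem sum_choose_card_sym2_mul_pow_le {n : ℕ} {p s r : ℝ} (hp : 0 ≤ p)
    (hsp : exp 1 * s * p ≤ 1) (hr : 0 ≤ r) (hr₁ : r ≤ 1 / 2)
    (hrsq : exp 1 ^ 5 * s * n ^ 2 * p ^ 3 ≤ r ^ 2) :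
    ∑ T ∈ (univ : Finset (Finset (Fin n))) with 1 ≤ #T ∧ (#T : ℝ) ≤ s,
      ((#T.sym2).choose ((3 * #T + 1) / 2) * p ^ ((3 * #T + 1) / 2) : ℝ) ≤ 2 * r := by
  set P : ℕ → Prop := fun t => 1 ≤ t ∧ (t : ℝ) ≤ s
  set g : ℕ → ℝ := fun t => ((t + 1).choose 2).choose ((3 * t + 1) / 2) * p ^ ((3 * t + 1) / 2)
  have hsizes : ∑ T ∈ (univ : Finset (Finset (Fin n))) with P #T, g #T
      = ∑ t ∈ range (n + 1) with P t, n.choose t * g t := by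
    rw [sum_filter, ← powerset_univ, sum_powerset_apply_card (fun t => if P t then g t else 0),
      card_univ, Fintype.card_fin, sum_filter]
    simp [nsmul_eq_mul]
  calc _ = ∑ t ∈ range (n + 1) with P t, n.choose t * g t := by
        simp only [card_sym2]; exact hsizes
    _ ≤ ∑ t ∈ range (n + 1) with P t, r ^ t := by
        refine sum_le_sum fun t ht => ?_
        obtain ⟨-, ht1, hts⟩ := mem_filter.1 ht
        refine choose_mul_choose_mul_pow_le ht1 ?_ (by omega) hp hts hsp hr hrsq
        have : (t + 1).choose 2 ≤ t ^ 2 := by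
          rw [Nat.choose_two_right, Nat.add_sub_cancel]
          exact Nat.div_le_of_le_mul (by nlinarith)
        exact_mod_cast this
    _ ≤ ∑ t ∈ Ico 1 (n + 1), r ^ t := by
        refine sum_le_sum_of_subset_of_nonneg (fun t ht => ?_) fun _ _ _ => by positivity
        simp only [mem_filter, mem_range, P] at ht
        exact mem_Ico.2 ⟨ht.2.1, ht.1⟩
    _ ≤ r ^ 1 / (1 - r) := geom_sum_Ico_le_of_lt_one hr (by linarith)
    _ ≤ 2 * r := by rw [pow_one, div_le_iff₀ (by linarith)]; nlinarith

theorem gnp_exists_not_colorable_le {n : ℕ} {p s r : ℝ} (hp₀ : 0 ≤ p) (hp₁ : p ≤ 1)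
    (hsp : exp 1 * s * p ≤ 1) (hr : 0 ≤ r) (hr₁ : r ≤ 1 / 2)
    (hrsq : exp 1 ^ 5 * s * n ^ 2 * p ^ 3 ≤ r ^ 2) :
    gnp n p {ω | ∃ S : Finset (Fin n), (#S : ℝ) ≤ s ∧
      ¬ ((graphOf ω).induce (S : Set (Fin n))).Colorable 3} ≤ ENNReal.ofReal (2 * r) := by
  classical
  set 𝒯 := (univ : Finset (Finset (Fin n))).filter fun T => 1 ≤ #T ∧ (#T : ℝ) ≤ s
  have hcover : {ω : Sym2 (Fin n) → Bool | ∃ S : Finset (Fin n), (#S : ℝ) ≤ s ∧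
      ¬ ((graphOf ω).induce (S : Set (Fin n))).Colorable 3} ⊆
      ⋃ T ∈ 𝒯, {ω | (3 * #T + 1) / 2 ≤ #{e ∈ T.sym2 | ω e = true}} := by
    rintro ω ⟨S, hS, hcol⟩
    obtain ⟨T, hTS, hT, hdeg⟩ :=
      (graphOf ω).exists_subset_le_card_neighborFinset_inter_of_not_colorable hcol
    have hedges := (graphOf ω).mul_card_le_two_mul_card_edgeFinset_inter_sym2 hdeg
    have hpresent : #((graphOf ω).edgeFinset ∩ T.sym2) ≤ #{e ∈ T.sym2 | ω e = true} :=
      card_le_card fun e he => by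
        rw [mem_inter, SimpleGraph.mem_edgeFinset] at he
        exact mem_filter.2 ⟨he.2, graphOf_edgeSet_subset ω he.1⟩
    simp only [Set.mem_iUnion]
    refine ⟨T, mem_filter.2 ⟨mem_univ _, hT.card_pos, le_trans ?_ hS⟩, ?_⟩
    · exact_mod_cast card_le_card hTS
    · show (3 * #T + 1) / 2 ≤ _
      omega
  calc _ ≤ ∑ T ∈ 𝒯, gnp n p {ω | (3 * #T + 1) / 2 ≤ #{e ∈ T.sym2 | ω e = true}} :=
        (measure_mono hcover).trans (measure_biUnion_finset_le _ _)
    _ ≤ ∑ T ∈ 𝒯, ENNReal.ofReal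
          ((#T.sym2).choose ((3 * #T + 1) / 2) * p ^ ((3 * #T + 1) / 2)) :=
        sum_le_sum fun T _ => gnp_le_card_filter_le hp₀ hp₁ _ _
    _ = ENNReal.ofReal (∑ T ∈ 𝒯,
          (#T.sym2).choose ((3 * #T + 1) / 2) * p ^ ((3 * #T + 1) / 2)) :=
        (ENNReal.ofReal_sum_of_nonneg fun _ _ => by positivity).symm
    _ ≤ ENNReal.ofReal (2 * r) :=
        ENNReal.ofReal_le_ofReal (sum_choose_card_sym2_mul_pow_le hp₀ hsp hr hr₁ hrsq)

theorem sqrt_mul_pow_mul_rpow_neg_pow {x : ℝ} (hx : 0 < x) (α : ℝ) (a b : ℕ) :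
    √x * x ^ a * (x ^ (-α)) ^ b = x ^ (1 / 2 + a - b * α) := by
  rw [sqrt_eq_rpow, ← rpow_natCast, ← rpow_natCast, ← rpow_mul hx.le, ← rpow_add hx,
    ← rpow_add hx]
  ring_nf

theorem tendsto_sqrt_mul_pow_mul_rpow_neg_pow {α : ℝ} {a b : ℕ} (h : 1 / 2 + a < b * α) :
    Tendsto (fun n : ℕ => √n * (n : ℝ) ^ a * ((n : ℝ) ^ (-α)) ^ b) atTop (𝓝 0) := by
  have hlim := (tendsto_rpow_neg_atTop (y := b * α - 1 / 2 - a) (by linarith)).comp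
    tendsto_natCast_atTop_atTop
  refine hlim.congr' ((eventually_gt_atTop 0).mono fun n hn => ?_)
  simp only [Function.comp_apply]
  rw [sqrt_mul_pow_mul_rpow_neg_pow (by exact_mod_cast hn)]
  ring_nf

lemma natCast_rpow_neg_le_one {α : ℝ} (hα : 0 ≤ α) (n : ℕ) : (n : ℝ) ^ (-α) ≤ 1 := by
  rcases n.eq_zero_or_pos with rfl | hn
  · exact_mod_cast zero_rpow_le_one _
  · exact rpow_le_one_of_one_le_of_nonpos (by exact_mod_cast hn) (by linarith)

theorem tendsto_gnp_exists_not_colorable {α : ℝ} (hα : 5 / 6 < α) (c : ℝ) :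
    Tendsto (fun n : ℕ => gnp n ((n : ℝ) ^ (-α)) {ω | ∃ S : Finset (Fin n), (#S : ℝ) ≤ c * √n ∧
      ¬ ((graphOf ω).induce (S : Set (Fin n))).Colorable 3}) atTop (𝓝 0) := by
  set p : ℕ → ℝ := fun n => (n : ℝ) ^ (-α)
  set r : ℕ → ℝ := fun n => √(exp 1 ^ 5 * (c * √n) * n ^ 2 * p n ^ 3)
  have hsp : ∀ᶠ n : ℕ in atTop, exp 1 * (c * √n) * p n ≤ 1 := by
    have : Tendsto (fun n : ℕ => exp 1 * (c * √n) * p n) atTop (𝓝 0) := by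
      convert (tendsto_sqrt_mul_pow_mul_rpow_neg_pow (α := α) (a := 0) (b := 1)
        (by push_cast; linarith)).const_mul (exp 1 * c) using 1
      · ext n; ring
      · rw [mul_zero]
    exact this.eventually_le_const one_pos
  have hr : Tendsto r atTop (𝓝 0) := by
    have : Tendsto (fun n : ℕ => exp 1 ^ 5 * (c * √n) * n ^ 2 * p n ^ 3) atTop (𝓝 0) := by
      convert (tendsto_sqrt_mul_pow_mul_rpow_neg_pow (α := α) (a := 2) (b := 3)
        (by push_cast; linarith)).const_mul (exp 1 ^ 5 * c) using 1
      · ext n; ring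
      · rw [mul_zero]
    simpa only [sqrt_zero] using this.sqrt
  refine tendsto_of_tendsto_of_tendsto_of_le_of_le' tendsto_const_nhds
    (by simpa only [mul_zero, ENNReal.ofReal_zero] using ENNReal.tendsto_ofReal (hr.const_mul 2))
    (.of_forall fun n => zero_le) ?_
  filter_upwards [hsp, hr.eventually_le_const (by norm_num : (0 : ℝ) < 1 / 2)] with n hsp hr₁
  exact gnp_exists_not_colorable_le (rpow_nonneg n.cast_nonneg _)
    (natCast_rpow_neg_le_one (by linarith) n) hsp (sqrt_nonneg _) hr₁
    (by rw [sq_sqrt']; exact le_max_left _ _)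

theorem small_sets_three_colorable_general (α : ℝ) (hα : 5 / 6 < α) (c : ℝ) :
    Filter.Tendsto
      (fun n : ℕ => gnp n ((n : ℝ) ^ (-α))
        {ω | ∀ S : Finset (Fin n), (S.card : ℝ) ≤ c * Real.sqrt n →
          ((graphOf ω).induce (S : Set (Fin n))).Colorable 3})
      Filter.atTop (nhds 1) := by
  have hgood := ENNReal.Tendsto.sub tendsto_const_nhds (tendsto_gnp_exists_not_colorable hα c)
    (.inl ENNReal.one_ne_top)
  rw [tsub_zero] at hgood
  refine hgood.congr fun n => ?_
  have := isProbabilityMeasure_gnp n (rpow_nonneg n.cast_nonneg _)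
    (natCast_rpow_neg_le_one (by linarith) n)
  rw [← prob_compl_eq_one_sub MeasurableSet.of_discrete]
  congr 1
  ext ω
  simp

/-- For `p = n^{-α}` with `α > 5/6` fixed and any constant `c > 0`, the probability that every
set of at most `c√n` vertices of `G ~ G(n,p)` induces a `3`-colorable subgraph tends to `1`
as `n → ∞`. -/
theorem small_sets_three_colorable (α : ℝ) (hα : 5 / 6 < α) (c : ℝ) (hc : 0 < c) :
    Filter.Tendsto
      (fun n : ℕ => gnp n ((n : ℝ) ^ (-α))
        {ω | ∀ S : Finset (Fin n), (S.card : ℝ) ≤ c * Real.sqrt n →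
          ((graphOf ω).induce (S : Set (Fin n))).Colorable 3})
      Filter.atTop (nhds 1) :=
  small_sets_three_colorable_general α hα c
end

section
/- Let Ω be a finite set, R a random subset with each element r included independently with probability p_r, and {A_i}_{i∈I} a finite family of subsets of Ω with B_i the event A_i ⊆ R. Write i ~ j if i ≠ j and A_i ∩ A_j ≠ ∅; let Δ = Σ_{i~j} Pr[B_i ∧ B_j], M = Π_i Pr[¬B_i], and assume Pr[B_i] ≤ ε for all i. Then M ≤ Pr[⋀_i ¬B_i] ≤ M·exp(Δ/(2(1-ε))). -/
/-!
Write `C s = ⋂ j ∈ s, (B j)ᶜ`. Harris' inequality (the FKG inequality on the lattice `Γ → Bool`,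
whose product measure satisfies `μ{a ⊓ b} μ{a ⊔ b} = μ{a} μ{b}`) makes the decreasing events
`(B i)ᶜ` positively correlated, which gives the lower bound by induction.

For the upper bound add the events one at a time. Split `s` into the indices `N` with `A j`
disjoint from `A i` and the rest `D`. Then `B i` is independent of `C N`, and an outcome of
`B i ∩ C N` outside `C s` lies in some `B i ∩ B j ∩ C N` with `j ∈ D`, whose probability Harris
bounds by `P(B i ∩ B j) P(C N)`. Hence `P(B i ∩ C s) ≥ (P(B i) - t) P(C s)` with
`t = ∑_{j ∈ D} P(B i ∩ B j)`, so `P(C (insert i s)) ≤ (1 - P(B i) + t) P(C s)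
≤ P((B i)ᶜ) exp(t / (1 - ε))`; over the whole induction the `t` add up to `Δ / 2`.
-/

open MeasureTheory
open scoped Classical

lemma isProbabilityMeasure_bernoulliMeasure_s18 {p : ℝ} (hp0 : 0 ≤ p) (hp1 : p ≤ 1) :
    IsProbabilityMeasure (bernoulliMeasure p) :=
  ⟨by simp [bernoulliMeasure, ← ENNReal.ofReal_add hp0 (sub_nonneg.2 hp1)]⟩

lemma IsUpperSet.monotone_indicator_one {α : Type*} [Preorder α] {s : Set α}
    (hs : IsUpperSet s) : Monotone (s.indicator (1 : α → ℝ)) := by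
  intro a b hab
  by_cases ha : a ∈ s
  · simp [ha, hs hab ha]
  · simp only [Set.indicator_of_notMem ha]
    exact Set.indicator_nonneg (fun _ _ => zero_le_one) b

lemma sum_measureReal_singleton_mul_indicator_one {α : Type*} [Fintype α] [MeasurableSpace α]
    [MeasurableSingletonClass α] (μ : Measure α) [IsFiniteMeasure μ] (s : Set α) :
    ∑ a, μ.real {a} * s.indicator 1 a = μ.real s := by
  simp only [Set.indicator_apply, Pi.one_apply, mul_ite, mul_one, mul_zero, ← Finset.sum_filter]
  simp

section Harris

variable {α : Type*} [DistribLattice α] [Fintype α] [MeasurableSpace α]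
  [MeasurableSingletonClass α] {μ : Measure α} [IsProbabilityMeasure μ] {s t : Set α}

theorem IsUpperSet.measureReal_mul_le_inter
    (hμ : ∀ a b, μ.real {a} * μ.real {b} ≤ μ.real {a ⊓ b} * μ.real {a ⊔ b})
    (hs : IsUpperSet s) (ht : IsUpperSet t) : μ.real s * μ.real t ≤ μ.real (s ∩ t) := by
  have := fkg (μ := fun a => μ.real {a}) (f := s.indicator 1) (g := t.indicator 1)
    (fun _ => measureReal_nonneg) (Set.indicator_nonneg fun _ _ => zero_le_one)
    (Set.indicator_nonneg fun _ _ => zero_le_one) hs.monotone_indicator_one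
    ht.monotone_indicator_one hμ
  simpa only [← Pi.mul_apply _ (t.indicator 1), ← Set.inter_indicator_one,
    sum_measureReal_singleton_mul_indicator_one, sum_measureReal_singleton, Finset.coe_univ,
    probReal_univ, one_mul] using this

theorem IsLowerSet.measureReal_mul_le_inter
    (hμ : ∀ a b, μ.real {a} * μ.real {b} ≤ μ.real {a ⊓ b} * μ.real {a ⊔ b})
    (hs : IsLowerSet s) (ht : IsLowerSet t) : μ.real s * μ.real t ≤ μ.real (s ∩ t) := by
  have h := hs.compl.measureReal_mul_le_inter hμ ht.compl
  rw [← Set.compl_union, probReal_compl_eq_one_sub .of_discrete,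
    probReal_compl_eq_one_sub .of_discrete, probReal_compl_eq_one_sub .of_discrete] at h
  nlinarith [measureReal_union_add_inter (μ := μ) (s := s) (t := t) .of_discrete]

theorem IsUpperSet.measureReal_inter_le_mul
    (hμ : ∀ a b, μ.real {a} * μ.real {b} ≤ μ.real {a ⊓ b} * μ.real {a ⊔ b})
    (hs : IsUpperSet s) (ht : IsLowerSet t) : μ.real (s ∩ t) ≤ μ.real s * μ.real t := by
  have h := hs.measureReal_mul_le_inter hμ ht.compl
  rw [probReal_compl_eq_one_sub .of_discrete, ← Set.sdiff_eq] at h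
  nlinarith [measureReal_inter_add_sdiff (μ := μ) (s := s) (t := t) .of_discrete]

end Harris

lemma DependsOn.preimage_image_restrict {ι : Type*} {α : ι → Type*} {S : Set (∀ i, α i)}
    {u : Finset ι} (hS : DependsOn (· ∈ S) u) :
    (fun ω (i : u) => ω i) ⁻¹' ((fun ω (i : u) => ω i) '' S) = S := by
  refine subset_antisymm ?_ (Set.subset_preimage_image _ S)
  rintro ω ⟨ω', hω', heq⟩
  have : (ω' ∈ S) = (ω ∈ S) := hS fun i hi => congrFun heq ⟨i, hi⟩
  exact this ▸ hω'

lemma dependsOn_biInter_compl {ι κ : Type*} {α : ι → Type*} {B : κ → Set (∀ i, α i)}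
    {s : Finset κ} {u : Set ι} (h : ∀ j ∈ s, DependsOn (· ∈ B j) u) :
    DependsOn (· ∈ ⋂ j ∈ s, (B j)ᶜ) u := by
  intro x y hxy
  simp only [Set.mem_iInter, Set.mem_compl_iff, eq_iff_iff]
  exact forall₂_congr fun j hj => not_congr (h j hj hxy).to_iff

section Product

variable {ι : Type*} [Fintype ι] {α : ι → Type*} [∀ i, MeasurableSpace (α i)]
  {ν : ∀ i, Measure (α i)}

theorem measureReal_pi_singleton_inf_mul_sup [∀ i, LinearOrder (α i)]
    [∀ i, MeasurableSingletonClass (α i)] [∀ i, SigmaFinite (ν i)] (a b : ∀ i, α i) :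
    (Measure.pi ν).real {a ⊓ b} * (Measure.pi ν).real {a ⊔ b} =
      (Measure.pi ν).real {a} * (Measure.pi ν).real {b} := by
  simp only [measureReal_def, ← ENNReal.toReal_mul, ← Set.univ_pi_singleton, Measure.pi_pi,
    ← Finset.prod_mul_distrib]
  congr 1
  refine Finset.prod_congr rfl fun i _ => ?_
  rcases le_total (a i) (b i) with h | h
  · simp [h]
  · simp [h, mul_comm]

theorem measureReal_pi_inter_eq_mul_of_dependsOn [∀ i, MeasurableSingletonClass (α i)]
    [∀ i, Countable (α i)] [∀ i, IsProbabilityMeasure (ν i)] {S T : Set (∀ i, α i)}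
    {u : Finset ι} (hS : DependsOn (· ∈ S) u) (hT : DependsOn (· ∈ T) ↑uᶜ) :
    (Measure.pi ν).real (S ∩ T) = (Measure.pi ν).real S * (Measure.pi ν).real T := by
  have hind := (ProbabilityTheory.iIndepFun_pi (μ := ν) (X := fun _ x => x)
    fun _ => aemeasurable_id).indepFun_finset u uᶜ disjoint_compl_right measurable_pi_apply
  rw [← hS.preimage_image_restrict, ← hT.preimage_image_restrict]
  rw [measureReal_def, hind.measure_inter_preimage_eq_mul _ _ .of_discrete .of_discrete,
    ENNReal.toReal_mul, measureReal_def, measureReal_def]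

end Product

section RandomSubset

variable {Γ : Type*} (u : Finset Γ)

lemma isUpperSet_setOf_forall_mem_eq_true : IsUpperSet {ω : Γ → Bool | ∀ r ∈ u, ω r = true} :=
  fun _ _ hle hω r hr => Bool.le_iff_imp.1 (hle r) (hω r hr)

lemma dependsOn_setOf_forall_mem_eq_true :
    DependsOn (· ∈ {ω : Γ → Bool | ∀ r ∈ u, ω r = true}) u :=
  fun _ _ h => propext (forall₂_congr fun r hr => by rw [h r hr])

end RandomSubset

theorem Finset.sum_insert_product_insert_of_symm {ι M : Type*} [AddCommMonoid M]
    {f : ι → ι → M} (hf : ∀ x y, f x y = f y x) {i : ι} {s : Finset ι} (hi : i ∉ s) :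
    ∑ q ∈ insert i s ×ˢ insert i s, f q.1 q.2 =
      ∑ q ∈ s ×ˢ s, f q.1 q.2 + f i i + 2 • ∑ j ∈ s, f i j := by
  simp only [Finset.sum_product, Finset.sum_insert hi, Finset.sum_add_distrib, hf _ i, two_nsmul]
  abel

lemma one_sub_add_le_mul_exp {b t ε : ℝ} (hb : b ≤ ε) (hε : ε < 1) (ht : 0 ≤ t) :
    1 - b + t ≤ (1 - b) * Real.exp (t / (1 - ε)) := by
  have hε' : 0 < 1 - ε := sub_pos.2 hε
  have hlin : t ≤ (1 - b) * (t / (1 - ε)) := by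
    rw [mul_div_assoc', le_div_iff₀ hε']
    nlinarith
  nlinarith [Real.add_one_le_exp (t / (1 - ε)), sub_pos.2 (hb.trans_lt hε)]

section JansonDelta

variable {Ω Γ I : Type*} [MeasurableSpace Ω] (μ : Measure Ω) (A : I → Finset Γ) (B : I → Set Ω)

noncomputable def jansonDelta (s : Finset I) : ℝ :=
  ∑ q ∈ s ×ˢ s, if q.1 ≠ q.2 ∧ (A q.1 ∩ A q.2).Nonempty then μ.real (B q.1 ∩ B q.2) else 0

lemma jansonDelta_nonneg (s : Finset I) : 0 ≤ jansonDelta μ A B s :=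
  Finset.sum_nonneg fun _ _ => by split_ifs <;> simp

lemma jansonDelta_insert {i : I} {s : Finset I} (hi : i ∉ s) :
    jansonDelta μ A B (insert i s) =
      jansonDelta μ A B s + 2 * ∑ j ∈ s with (A i ∩ A j).Nonempty, μ.real (B i ∩ B j) := by
  have hsymm : ∀ x y, (if x ≠ y ∧ (A x ∩ A y).Nonempty then μ.real (B x ∩ B y) else 0) =
      if y ≠ x ∧ (A y ∩ A x).Nonempty then μ.real (B y ∩ B x) else 0 := fun x y => by
    simp_rw [ne_comm (a := x), Finset.inter_comm (A x), Set.inter_comm (B x)]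
  rw [jansonDelta, jansonDelta, Finset.sum_insert_product_insert_of_symm hsymm hi,
    if_neg (by simp), add_zero, nsmul_eq_mul, Nat.cast_ofNat, Finset.sum_filter]
  congr 2
  refine Finset.sum_congr rfl fun j hj => ?_
  simp [(ne_of_mem_of_not_mem hj hi).symm]

end JansonDelta

section Janson

variable {Γ I : Type*} [Fintype Γ] {ν : Γ → Measure Bool} [∀ r, IsProbabilityMeasure (ν r)]
  {A : I → Finset Γ} {B : I → Set (Γ → Bool)}

theorem prod_measureReal_compl_le_biInter_compl (hB : ∀ i, IsUpperSet (B i)) (s : Finset I) :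
    ∏ i ∈ s, (Measure.pi ν).real (B i)ᶜ ≤ (Measure.pi ν).real (⋂ i ∈ s, (B i)ᶜ) := by
  induction s using Finset.induction with
  | empty => simp
  | insert i s hi ih =>
    rw [Finset.prod_insert hi, Finset.set_biInter_insert]
    refine (mul_le_mul_of_nonneg_left ih measureReal_nonneg).trans ?_
    exact (hB i).compl.measureReal_mul_le_inter
      (fun a b => (measureReal_pi_singleton_inf_mul_sup a b).ge)
      (isLowerSet_iInter₂ fun j _ => (hB j).compl)

theorem measureReal_sub_sum_mul_le_inter_biInter_compl (hB : ∀ i, IsUpperSet (B i))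
    (hBA : ∀ i, DependsOn (· ∈ B i) ↑(A i)) (i : I) (s : Finset I) :
    ((Measure.pi ν).real (B i) -
        ∑ j ∈ s with (A i ∩ A j).Nonempty, (Measure.pi ν).real (B i ∩ B j)) *
      (Measure.pi ν).real (⋂ j ∈ s, (B j)ᶜ) ≤ (Measure.pi ν).real (B i ∩ ⋂ j ∈ s, (B j)ᶜ) := by
  set μ := Measure.pi ν
  set D := s.filter fun j => (A i ∩ A j).Nonempty
  set N := s.filter fun j => ¬(A i ∩ A j).Nonempty
  set CN := ⋂ j ∈ N, (B j)ᶜ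
  set Cs := ⋂ j ∈ s, (B j)ᶜ
  have hindep : μ.real (B i ∩ CN) = μ.real (B i) * μ.real CN := by
    refine measureReal_pi_inter_eq_mul_of_dependsOn (hBA i) (dependsOn_biInter_compl fun j hj => ?_)
    exact (hBA j).mono fun r hr => Finset.mem_compl.2 fun hri =>
      (Finset.mem_filter.1 hj).2 ⟨r, Finset.mem_inter.2 ⟨hri, hr⟩⟩
  have hcover : B i ∩ CN ⊆ (B i ∩ Cs) ∪ ⋃ j ∈ D, B i ∩ B j ∩ CN := by
    rintro ω ⟨hωi, hωN⟩
    by_cases hωs : ω ∈ Cs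
    · exact Or.inl ⟨hωi, hωs⟩
    · simp only [Cs, CN, Set.mem_iInter, Set.mem_compl_iff, not_forall, not_not] at hωs hωN
      obtain ⟨j, hjs, hωj⟩ := hωs
      have hjD : j ∈ D := Finset.mem_filter.2
        ⟨hjs, by_contra fun h => hωN j (Finset.mem_filter.2 ⟨hjs, h⟩) hωj⟩
      refine Or.inr (Set.mem_biUnion hjD ⟨⟨hωi, hωj⟩, ?_⟩)
      simpa [CN] using hωN
  have hpair : ∀ j, μ.real (B i ∩ B j ∩ CN) ≤ μ.real (B i ∩ B j) * μ.real CN := fun j =>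
    ((hB i).inter (hB j)).measureReal_inter_le_mul
      (fun a b => (measureReal_pi_singleton_inf_mul_sup a b).ge)
      (isLowerSet_iInter₂ fun j _ => (hB j).compl)
  have hmain : μ.real (B i) * μ.real CN ≤
      μ.real (B i ∩ Cs) + (∑ j ∈ D, μ.real (B i ∩ B j)) * μ.real CN := calc
    μ.real (B i) * μ.real CN = μ.real (B i ∩ CN) := hindep.symm
    _ ≤ μ.real ((B i ∩ Cs) ∪ ⋃ j ∈ D, B i ∩ B j ∩ CN) := measureReal_mono hcover
    _ ≤ μ.real (B i ∩ Cs) + ∑ j ∈ D, μ.real (B i ∩ B j ∩ CN) :=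
      (measureReal_union_le _ _).trans (by gcongr; exact measureReal_biUnion_finset_le _ _)
    _ ≤ μ.real (B i ∩ Cs) + (∑ j ∈ D, μ.real (B i ∩ B j)) * μ.real CN := by
      rw [Finset.sum_mul]; gcongr with j; exact hpair j
  have hNs : μ.real Cs ≤ μ.real CN :=
    measureReal_mono (Set.biInter_subset_biInter_left (Finset.filter_subset _ s))
  rcases le_total 0 (μ.real (B i) - ∑ j ∈ D, μ.real (B i ∩ B j)) with h | h
  · nlinarith [mul_le_mul_of_nonneg_left hNs h]
  · exact (mul_nonpos_of_nonpos_of_nonneg h measureReal_nonneg).trans measureReal_nonneg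

theorem measureReal_biInter_compl_insert_le (hB : ∀ i, IsUpperSet (B i))
    (hBA : ∀ i, DependsOn (· ∈ B i) ↑(A i)) (i : I) (s : Finset I) :
    (Measure.pi ν).real (⋂ j ∈ insert i s, (B j)ᶜ) ≤
      (1 - (Measure.pi ν).real (B i) +
        ∑ j ∈ s with (A i ∩ A j).Nonempty, (Measure.pi ν).real (B i ∩ B j)) *
      (Measure.pi ν).real (⋂ j ∈ s, (B j)ᶜ) := by
  rw [Finset.set_biInter_insert, Set.inter_comm, ← Set.sdiff_eq]
  have := measureReal_sdiff_add_inter (μ := Measure.pi ν) (s := ⋂ j ∈ s, (B j)ᶜ)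
    (t := B i) .of_discrete
  rw [Set.inter_comm] at this
  linarith [measureReal_sub_sum_mul_le_inter_biInter_compl (ν := ν) hB hBA i s]

theorem measureReal_biInter_compl_le_prod_mul_exp (hB : ∀ i, IsUpperSet (B i))
    (hBA : ∀ i, DependsOn (· ∈ B i) ↑(A i)) {ε : ℝ} (hε : ε < 1)
    (hBε : ∀ i, (Measure.pi ν).real (B i) ≤ ε) (s : Finset I) :
    (Measure.pi ν).real (⋂ i ∈ s, (B i)ᶜ) ≤
      (∏ i ∈ s, (Measure.pi ν).real (B i)ᶜ) *
        Real.exp (jansonDelta (Measure.pi ν) A B s / (2 * (1 - ε))) := by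
  induction s using Finset.induction with
  | empty => simp [jansonDelta]
  | insert i s hi ih =>
    set t := ∑ j ∈ s with (A i ∩ A j).Nonempty, (Measure.pi ν).real (B i ∩ B j)
    have hexp : Real.exp (jansonDelta (Measure.pi ν) A B (insert i s) / (2 * (1 - ε))) =
        Real.exp (t / (1 - ε)) * Real.exp (jansonDelta (Measure.pi ν) A B s / (2 * (1 - ε))) := by
      rw [jansonDelta_insert _ _ _ hi, ← Real.exp_add]
      congr 1
      field_simp
      ring
    rw [Finset.prod_insert hi, hexp, probReal_compl_eq_one_sub .of_discrete]
    calc (Measure.pi ν).real (⋂ j ∈ insert i s, (B j)ᶜ)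
        ≤ (1 - (Measure.pi ν).real (B i) + t) * (Measure.pi ν).real (⋂ j ∈ s, (B j)ᶜ) :=
          measureReal_biInter_compl_insert_le hB hBA i s
      _ ≤ (1 - (Measure.pi ν).real (B i)) * Real.exp (t / (1 - ε)) *
          ((∏ i ∈ s, (Measure.pi ν).real (B i)ᶜ) *
            Real.exp (jansonDelta (Measure.pi ν) A B s / (2 * (1 - ε)))) := by
          gcongr
          · exact mul_nonneg (by linarith [hBε i]) (Real.exp_nonneg _)
          · exact one_sub_add_le_mul_exp (hBε i) hε
              (Finset.sum_nonneg fun _ _ => measureReal_nonneg)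
      _ = _ := by ring

theorem measureReal_biInter_compl_le_prod_mul_exp_of_le_ofReal (hB : ∀ i, IsUpperSet (B i))
    (hBA : ∀ i, DependsOn (· ∈ B i) ↑(A i)) {ε : ℝ} (hε : ε < 1)
    (hBε : ∀ i, Measure.pi ν (B i) ≤ ENNReal.ofReal ε) (s : Finset I) :
    (Measure.pi ν).real (⋂ i ∈ s, (B i)ᶜ) ≤
      (∏ i ∈ s, (Measure.pi ν).real (B i)ᶜ) *
        Real.exp (jansonDelta (Measure.pi ν) A B s / (2 * (1 - ε))) := by
  rcases le_or_gt 0 ε with hε0 | hεneg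
  · exact measureReal_biInter_compl_le_prod_mul_exp hB hBA hε
      (fun i => ENNReal.toReal_le_of_le_ofReal hε0 (hBε i)) s
  · have hnull (i : I) : (Measure.pi ν).real (B i) = 0 :=
      (measureReal_eq_zero_iff).2 (by simpa [ENNReal.ofReal_of_nonpos hεneg.le] using hBε i)
    simp only [probReal_compl_eq_one_sub .of_discrete, hnull, sub_zero, Finset.prod_const_one,
      one_mul]
    exact measureReal_le_one.trans
      (Real.one_le_exp (div_nonneg (jansonDelta_nonneg _ _ _ s) (by linarith)))

end Janson

/-- **Janson's inequality**: for a random subset `R` of a finite set `Γ` with independent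
inclusion probabilities `p r`, events `Bᵢ = {Aᵢ ⊆ R}`, dependency `i ~ j ↔ i ≠ j ∧ Aᵢ ∩ Aⱼ ≠ ∅`,
`Δ = Σ_{i~j} Pr[Bᵢ ∧ Bⱼ]`, `M = Π_i Pr[¬Bᵢ]`, and `Pr[Bᵢ] ≤ ε` for all `i`, we have
`M ≤ Pr[⋀ᵢ ¬Bᵢ] ≤ M·exp(Δ/(2(1-ε)))`. -/
theorem janson_inequality {Γ I : Type*} [Fintype Γ] [Fintype I] (p : Γ → ℝ)
    (hp0 : ∀ r, 0 ≤ p r) (hp1 : ∀ r, p r ≤ 1) (A : I → Finset Γ) (ε : ℝ) (hε : ε < 1)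
    (μ : Measure (Γ → Bool)) (hμ : μ = Measure.pi fun r => bernoulliMeasure (p r))
    (B : I → Set (Γ → Bool)) (hB : ∀ i, B i = {ω | ∀ r ∈ A i, ω r = true})
    (hεbound : ∀ i, μ (B i) ≤ ENNReal.ofReal ε)
    (Δ M : ℝ)
    (hΔ : Δ = ∑ q : I × I, if q.1 ≠ q.2 ∧ (A q.1 ∩ A q.2).Nonempty
      then (μ (B q.1 ∩ B q.2)).toReal else 0)
    (hM : M = ∏ i, (μ (B i)ᶜ).toReal) :
    ENNReal.ofReal M ≤ μ (⋂ i, (B i)ᶜ) ∧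
      μ (⋂ i, (B i)ᶜ) ≤ ENNReal.ofReal (M * Real.exp (Δ / (2 * (1 - ε)))) := by
  have (r : Γ) := isProbabilityMeasure_bernoulliMeasure_s18 (hp0 r) (hp1 r)
  have hup (i : I) : IsUpperSet (B i) := hB i ▸ isUpperSet_setOf_forall_mem_eq_true (A i)
  have hdep (i : I) : DependsOn (· ∈ B i) ↑(A i) :=
    hB i ▸ dependsOn_setOf_forall_mem_eq_true (A i)
  have hΔ' : Δ = jansonDelta μ A B Finset.univ := by
    rw [hΔ, jansonDelta, Finset.univ_product_univ]; rfl
  have hC : ⋂ i, (B i)ᶜ = ⋂ i ∈ Finset.univ, (B i)ᶜ := by simp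
  subst hμ
  rw [hC, ← ofReal_measureReal]
  exact ⟨ENNReal.ofReal_le_ofReal (hM ▸ prod_measureReal_compl_le_biInter_compl hup _),
    ENNReal.ofReal_le_ofReal (hM ▸ hΔ' ▸
      measureReal_biInter_compl_le_prod_mul_exp_of_le_ofReal hup hdep hε hεbound _)⟩
end
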